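/- arXiv:0812.3146 — 6 statements merged into one kernel-verified Lean document; each statement's English description precedes it below -/
import Mathlib

section
/- Let k be a nonnegative integer, A = {0,1,…,k}, X ⊆ A, and X̄ = A ∖ X. Then V(X) = V(X̄) · ∏_{x ∈ X̄} 1/(x!·(k−x)!) · ∏_{i=1}^{k} i!, as an identity of rational numbers. -/
open Finset

/-!
Write `A = {0, …, k} = X ⊔ X̄`. Splitting the pairs of `A` according to where their endpoints lie
gives `V(A) = V(X) V(X̄) D`, where `D = ∏_{x ∈ X, y ∈ X̄} |x - y|`. On the other hand, for `y ∈ X̄`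
the product of `|y - z|` over `z ∈ A ∖ {y}` is `y! (k - y)!`, and multiplying these over `y ∈ X̄`
gives `D V(X̄)²`. Eliminating `D`, and using `V(A) = ∏_{i=1}^{k} i!`, gives the identity.
-/

/-- Vandermonde product of a finite set of naturals, as a rational:
`V(S) = ∏_{x,y ∈ S, x < y} (y - x)`. -/
def vand (S : Finset ℕ) : ℚ :=
  ∏ x ∈ S, ∏ y ∈ S.filter (fun y => x < y), ((y : ℚ) - (x : ℚ))

lemma prod_abs_sub_eq_prod_gt_mul_prod_lt {a : ℕ} {S : Finset ℕ} (ha : a ∉ S) :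
    ∏ y ∈ S, |(a : ℚ) - y| =
      (∏ y ∈ S with a < y, ((y : ℚ) - a)) * ∏ y ∈ S with y < a, ((a : ℚ) - y) := by
  have hne : S.filter (¬ a < ·) = S.filter (· < a) :=
    filter_congr fun y hy => by have := ne_of_mem_of_not_mem hy ha; omega
  rw [← prod_filter_mul_prod_filter_not S (a < ·), hne]
  congr 1 <;> refine prod_congr rfl fun y hy => ?_ <;> have := (mem_filter.mp hy).2
  · rw [abs_sub_comm, abs_of_pos (by rw [sub_pos]; exact_mod_cast this)]
  · rw [abs_of_pos (by rw [sub_pos]; exact_mod_cast this)]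

lemma vand_insert {a : ℕ} {S : Finset ℕ} (ha : a ∉ S) :
    vand (insert a S) = vand S * ∏ y ∈ S, |(a : ℚ) - y| := by
  have hrow : ∀ x ∈ S, ∏ y ∈ insert a S with x < y, ((y : ℚ) - x) =
      (if x < a then (a : ℚ) - x else 1) * ∏ y ∈ S with x < y, ((y : ℚ) - x) := by
    intro x hx
    rw [filter_insert]
    split_ifs
    · exact prod_insert (by simp [ha])
    · exact (one_mul _).symm
  rw [vand, prod_insert ha, filter_insert, if_neg (lt_irrefl a), prod_congr rfl hrow,
    prod_mul_distrib, prod_ite, prod_const_one, mul_one,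
    prod_abs_sub_eq_prod_gt_mul_prod_lt ha, vand]
  ring

lemma vand_union {S T : Finset ℕ} (h : Disjoint S T) :
    vand (S ∪ T) = vand S * vand T * ∏ x ∈ S, ∏ y ∈ T, |(x : ℚ) - y| := by
  induction T using Finset.induction_on with
  | empty => simp [vand]
  | insert a T ha ih =>
    rw [disjoint_insert_right] at h
    rw [union_insert, vand_insert (by simp [ha, h.1]), ih h.2, vand_insert ha, prod_union h.2]
    simp_rw [prod_insert ha]
    rw [prod_mul_distrib]
    simp_rw [abs_sub_comm (a : ℚ)]
    ring

lemma vand_sq (S : Finset ℕ) : vand S ^ 2 = ∏ x ∈ S, ∏ y ∈ S.erase x, |(x : ℚ) - y| := by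
  induction S using Finset.induction_on with
  | empty => simp [vand]
  | insert a S ha ih =>
    have hrow : ∀ x ∈ S, ∏ y ∈ (insert a S).erase x, |(x : ℚ) - y| =
        |(x : ℚ) - a| * ∏ y ∈ S.erase x, |(x : ℚ) - y| := by
      intro x hx
      rw [erase_insert_of_ne (ne_of_mem_of_not_mem hx ha).symm, prod_insert (by simp [ha])]
    rw [vand_insert ha, mul_pow, ih, prod_insert ha, erase_insert ha, prod_congr rfl hrow,
      prod_mul_distrib]
    simp_rw [abs_sub_comm _ (a : ℚ)]
    ring

lemma vand_mul_prod_sdiff_prod_erase_abs_sub {A X : Finset ℕ} (hX : X ⊆ A) :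
    vand X * ∏ y ∈ A \ X, ∏ z ∈ A.erase y, |(y : ℚ) - z| = vand A * vand (A \ X) := by
  have hdisj : Disjoint X (A \ X) := disjoint_sdiff
  have hrow : ∀ y ∈ A \ X, ∏ z ∈ A.erase y, |(y : ℚ) - z| =
      (∏ x ∈ X, |(x : ℚ) - y|) * ∏ z ∈ (A \ X).erase y, |(y : ℚ) - z| := by
    intro y hy
    have hsplit : A.erase y = X ∪ (A \ X).erase y := by
      ext z; grind
    rw [hsplit, prod_union (hdisj.mono_right (erase_subset y _))]
    simp_rw [abs_sub_comm (y : ℚ)]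
  have hunion := vand_union hdisj
  rw [union_sdiff_of_subset hX] at hunion
  rw [prod_congr rfl hrow, prod_mul_distrib, ← vand_sq, prod_comm, hunion]
  ring

lemma prod_range_abs_sub_eq_factorial (n : ℕ) : ∏ y ∈ range n, |(n : ℚ) - y| = n.factorial := by
  rw [← Nat.descFactorial_self, Nat.descFactorial_eq_prod_range, Nat.cast_prod]
  refine prod_congr rfl fun y hy => ?_
  have := mem_range.mp hy
  rw [Nat.cast_sub this.le, abs_of_pos (by rw [sub_pos]; exact_mod_cast this)]

lemma prod_erase_range_abs_sub_eq_factorial_mul_factorial {k x : ℕ} (hx : x ≤ k) :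
    ∏ y ∈ (range (k + 1)).erase x, |(x : ℚ) - y| = x.factorial * (k - x).factorial := by
  have hsplit : (range (k + 1)).erase x = range x ∪ Ico (x + 1) (k + 1) := by
    ext y; simp only [mem_erase, mem_range, mem_union, mem_Ico]; omega
  rw [hsplit, prod_union (disjoint_left.mpr fun y hy hy' => by simp at hy hy'; omega),
    prod_range_abs_sub_eq_factorial, prod_Ico_eq_prod_range, Nat.add_sub_add_right,
    ← prod_range_add_one_eq_factorial (k - x), Nat.cast_prod]
  congr 1
  refine prod_congr rfl fun j _ => ?_
  push_cast
  rw [show (x : ℚ) - (x + 1 + j) = -(j + 1) by ring, abs_neg, abs_of_pos (by positivity)]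

lemma vand_range (k : ℕ) : vand (range (k + 1)) = ∏ i ∈ Icc 1 k, (i.factorial : ℚ) := by
  induction k with
  | zero => simp [vand, filter_singleton]
  | succ k ih =>
    rw [range_add_one, vand_insert (by simp), ih, prod_range_abs_sub_eq_factorial,
      prod_Icc_succ_top (by omega)]

/-- for `A = {0,1,…,k}`, `X ⊆ A` and `X̄ = A \ X`,
`V(X) = V(X̄) · ∏_{x ∈ X̄} 1/(x!·(k−x)!) · ∏_{i=1}^{k} i!`. -/
theorem vandermonde_complement (k : ℕ) (X : Finset ℕ) (hX : X ⊆ Finset.range (k + 1)) :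
    vand X = vand (Finset.range (k + 1) \ X)
      * (∏ x ∈ Finset.range (k + 1) \ X,
          (1 : ℚ) / ((Nat.factorial x : ℚ) * (Nat.factorial (k - x) : ℚ)))
      * ∏ i ∈ Finset.Icc 1 k, (Nat.factorial i : ℚ) := by
  have hfac : ∀ y ∈ range (k + 1) \ X, ∏ z ∈ (range (k + 1)).erase y, |(y : ℚ) - z| =
      y.factorial * (k - y).factorial := fun y hy =>
    prod_erase_range_abs_sub_eq_factorial_mul_factorial (by grind)
  have key := vand_mul_prod_sdiff_prod_erase_abs_sub hX
  rw [prod_congr rfl hfac, vand_range] at key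
  have hne : ∏ y ∈ range (k + 1) \ X, ((y.factorial : ℚ) * (k - y).factorial) ≠ 0 := by
    positivity
  rw [prod_div_distrib, prod_const_one]
  field_simp
  linear_combination key
end

section
/- Let N ≥ 1, p ≥ 1 be integers, let λ = (λ_1 ≥ ⋯ ≥ λ_N) be a signature with p ≥ λ_1, λ_N ≥ 0, and let μ = (μ_1 ≥ ⋯ ≥ μ_{N+1}) be a signature with p ≥ μ_1, μ_{N+1} ≥ 0. Write X(λ) = (x_1 < ⋯ < x_p) ⊂ {0,…,N+p−1} and X(μ) = (x'_1 < ⋯ < x'_p) ⊂ {0,…,N+p}. Then λ and μ interlace, i.e. μ_1 ≥ λ_1 ≥ μ_2 ≥ λ_2 ≥ ⋯ ≥ λ_N ≥ μ_{N+1}, if and only if for every i = 1,…,p one has x'_i = x_i or x'_i = x_i + 1. -/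
/-!
Both sides compare sorted sequences, and for sorted sequences `u`, `v` the comparison
`v i ≤ u (i + d)` is equivalent to the inequality `#{u < t} ≤ #{v < t} + d` between their counting
functions. The points `λ_i − i + N` and the holes `X(λ)` partition `{0,…,N+p−1}`, so their
counting functions add up to `min(N+p, t)`, and likewise for `μ` and `X(μ)` in `{0,…,N+p}`.
Under these identities the two counting inequalities expressing interlacing become the two
expressing `x_i ≤ x'_i ≤ x_i + 1`.
-/

open Finset

theorem Fin.card_filter_le {n : ℕ} (P : Fin n → Prop) [DecidablePred P] : #{i | P i} ≤ n := by
  simpa using card_le_univ ({i | P i} : Finset (Fin n))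

section Counting

variable {α : Type*} [LinearOrder α] {m n : ℕ}

theorem Monotone.forall_le_shift_iff_card_filter_lt {u : Fin m → α} {v : Fin n → α}
    (hu : Monotone u) (hv : Monotone v) {d : ℕ} (hmn : m ≤ n + d) :
    (∀ (i : Fin n) (j : Fin m), (j : ℕ) = i + d → v i ≤ u j) ↔
      ∀ t, #{j | u j < t} ≤ #{i | v i < t} + d := by
  constructor
  · intro h t
    by_contra! hlt
    have hum := Fin.card_filter_le fun j => u j < t
    set c := #{i | v i < t}
    have huj : u ⟨c + d, by omega⟩ < t := (Tuple.lt_card_lt_iff_apply_lt_of_monotone hu).mp hlt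
    have hvc : v ⟨c, by omega⟩ < t := (h _ _ rfl).trans_lt huj
    exact ((Tuple.lt_card_lt_iff_apply_lt_of_monotone hv).mpr hvc).false
  · intro h i j hij
    by_contra! hlt
    have hj := (Tuple.lt_card_lt_iff_apply_lt_of_monotone hu (a := v i)).mpr hlt
    have hi := (Tuple.lt_card_lt_iff_apply_lt_of_monotone hv (a := v i) (j := i)).mp
      (by have := h (v i); omega)
    exact hi.false

theorem Monotone.forall_le_iff_card_filter_lt {u v : Fin n → α} (hu : Monotone u)
    (hv : Monotone v) : (∀ i, v i ≤ u i) ↔ ∀ t, #{i | u i < t} ≤ #{i | v i < t} := by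
  simpa [Fin.val_inj] using hu.forall_le_shift_iff_card_filter_lt hv (d := 0) le_rfl

end Counting

theorem card_filter_add_one_lt {ι : Type*} [Fintype ι] (f : ι → ℤ) (t : ℤ) :
    #{i | f i + 1 < t} = #{i | f i < t - 1} := by
  simp only [← lt_sub_iff_add_lt]

theorem interlace_iff_card_filter_lt {n : ℕ} {a : Fin n → ℤ} {b : Fin (n + 1) → ℤ}
    (ha : Monotone a) (hb : Monotone b) :
    (∀ k, b k.castSucc ≤ a k ∧ a k < b k.succ) ↔
      ∀ t, #{k | a k < t} ≤ #{k | b k < t} ∧ #{k | b k < t} ≤ #{k | a k < t - 1} + 1 := by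
  have hlow : (∀ k, b k.castSucc ≤ a k) ↔
      ∀ (i : Fin (n + 1)) (j : Fin n), (j : ℕ) = i + 0 → b i ≤ a j :=
    ⟨fun h i j hij => by rw [show i = j.castSucc from Fin.ext hij.symm]; exact h j,
      fun h k => h _ _ rfl⟩
  have hup : (∀ k, a k < b k.succ) ↔
      ∀ (i : Fin n) (j : Fin (n + 1)), (j : ℕ) = i + 1 → a i + 1 ≤ b j :=
    ⟨fun h i j hij => by rw [show j = i.succ from Fin.ext hij]; exact h i,
      fun h k => h _ _ rfl⟩
  rw [forall_and, hlow, hup, ha.forall_le_shift_iff_card_filter_lt hb (by omega),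
    hb.forall_le_shift_iff_card_filter_lt (fun i j hij => by simpa using ha hij) le_rfl,
    ← forall_and]
  simp only [card_filter_add_one_lt, add_zero]

theorem forall_eq_or_eq_add_one_iff_card_filter_lt {n : ℕ} {x y : Fin n → ℤ} (hx : Monotone x)
    (hy : Monotone y) :
    (∀ i, y i = x i ∨ y i = x i + 1) ↔
      ∀ t, #{i | y i < t} ≤ #{i | x i < t} ∧ #{i | x i < t - 1} ≤ #{i | y i < t} := by
  have hx1 : Monotone fun i => x i + 1 := fun i j hij => by simpa using hx hij
  have hsplit : (∀ i, y i = x i ∨ y i = x i + 1) ↔ (∀ i, x i ≤ y i) ∧ ∀ i, y i ≤ x i + 1 := by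
    rw [← forall_and]
    exact forall_congr' fun i => by omega
  rw [hsplit, hy.forall_le_iff_card_filter_lt hx, hx1.forall_le_iff_card_filter_lt hy,
    ← forall_and]
  simp only [card_filter_add_one_lt]

theorem card_filter_add_card_filter_of_image_eq_sdiff {ι κ β : Type*} [Fintype ι] [Fintype κ]
    [DecidableEq β] {x : ι → β} {a : κ → β} {S : Finset β} (hx : Function.Injective x)
    (ha : Function.Injective a) (haS : ∀ k, a k ∈ S) (hX : univ.image x = S \ univ.image a)
    (P : β → Prop) [DecidablePred P] :
    #{i | P (x i)} + #{k | P (a k)} = #{y ∈ S | P y} := by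
  have hS : S = univ.image x ∪ univ.image a := by
    rw [hX, sdiff_union_of_subset]
    intro y hy
    obtain ⟨k, -, rfl⟩ := mem_image.mp hy
    exact haS k
  have hdisj : Disjoint (univ.image x) (univ.image a) := hX ▸ sdiff_disjoint
  rw [hS, filter_union, card_union_of_disjoint (disjoint_filter_filter hdisj), filter_image,
    filter_image, card_image_of_injective _ hx, card_image_of_injective _ ha]

theorem Int.card_filter_Icc_zero_lt (m t : ℤ) :
    #{y ∈ Icc 0 m | y < t} = (min (m + 1) t).toNat := by
  have : {y ∈ Icc 0 m | y < t} = Ico 0 (min (m + 1) t) := by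
    ext y
    simp only [mem_filter, mem_Icc, mem_Ico, lt_min_iff]
    omega
  rw [this, Int.card_Ico, sub_zero]

/-- For a signature `f = λ`, the points `λ_i − i + n` (`i = 1,…,n`) in increasing order. -/
def positions {n : ℕ} (f : Fin n → ℤ) (k : Fin n) : ℤ := f k.rev + k

theorem Antitone.strictMono_positions {n : ℕ} {f : Fin n → ℤ} (hf : Antitone f) :
    StrictMono (positions f) := by
  intro k l hkl
  have := hf (Fin.rev_le_rev.mpr hkl.le)
  have : (k : ℕ) < l := hkl
  simp only [positions]
  omega

theorem image_positions {n : ℕ} (f : Fin n → ℤ) :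
    univ.image (positions f) = univ.image fun i : Fin n => f i + n - 1 - i := by
  conv_lhs => rw [← image_univ_equiv Fin.revPerm, image_image]
  congr 1
  funext i
  simp only [Function.comp_apply, Fin.revPerm_apply, positions, Fin.rev_rev, Fin.val_rev]
  omega

theorem positions_mem_Icc {n : ℕ} {f : Fin n → ℤ} {c : ℤ} (hf0 : ∀ i, 0 ≤ f i)
    (hfc : ∀ i, f i ≤ c) (k : Fin n) : positions f k ∈ Icc 0 (n + c - 1) := by
  have := hf0 k.rev
  have := hfc k.rev
  have := k.isLt
  simp only [positions, mem_Icc]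
  omega

theorem interlace_iff_positions {n : ℕ} {f : Fin n → ℤ} {g : Fin (n + 1) → ℤ} :
    (∀ i, f i ≤ g i.castSucc ∧ g i.succ ≤ f i) ↔
      ∀ k, positions g k.castSucc ≤ positions f k ∧ positions f k < positions g k.succ := by
  rw [Fin.rev_surjective.forall]
  refine forall_congr' fun k => ?_
  simp only [positions, Fin.rev_castSucc, Fin.rev_succ, Fin.val_castSucc, Fin.val_succ]
  omega

theorem interlacing_iff_general (N p : ℕ)
    (lam : Fin N → ℤ) (hlmono : ∀ i j : Fin N, i ≤ j → lam j ≤ lam i)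
    (hltop : ∀ i, lam i ≤ p) (hlbot : ∀ i, 0 ≤ lam i)
    (mu : Fin (N + 1) → ℤ) (hmmono : ∀ i j : Fin (N + 1), i ≤ j → mu j ≤ mu i)
    (hmtop : ∀ i, mu i ≤ p) (hmbot : ∀ i, 0 ≤ mu i)
    (x : Fin p → ℤ) (hx : StrictMono x)
    (x' : Fin p → ℤ) (hx' : StrictMono x')
    (hX : Finset.image x Finset.univ
      = Finset.Icc (0 : ℤ) ((N : ℤ) + p - 1)
        \ Finset.image (fun i : Fin N => lam i + N - 1 - (i : ℕ)) Finset.univ)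
    (hX' : Finset.image x' Finset.univ
      = Finset.Icc (0 : ℤ) ((N : ℤ) + p)
        \ Finset.image (fun i : Fin (N + 1) => mu i + N - (i : ℕ)) Finset.univ) :
    (∀ i : Fin N, lam i ≤ mu i.castSucc ∧ mu i.succ ≤ lam i)
      ↔ ∀ i : Fin p, x' i = x i ∨ x' i = x i + 1 := by
  have hα : StrictMono (positions lam) := Antitone.strictMono_positions hlmono
  have hβ : StrictMono (positions mu) := Antitone.strictMono_positions hmmono
  have hcount (t : ℤ) :
      #{i | x i < t} + #{k | positions lam k < t} = (min ((N : ℤ) + p) t).toNat := by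
    rw [card_filter_add_card_filter_of_image_eq_sdiff hx.injective hα.injective
      (positions_mem_Icc hlbot hltop) (by rw [image_positions]; exact hX) (· < t),
      Int.card_filter_Icc_zero_lt, sub_add_cancel]
  have hcount' (t : ℤ) :
      #{i | x' i < t} + #{k | positions mu k < t} = (min ((N : ℤ) + p + 1) t).toNat := by
    rw [card_filter_add_card_filter_of_image_eq_sdiff hx'.injective hβ.injective
      (fun k => by convert positions_mem_Icc hmbot hmtop k using 2)
      (by rw [hX', image_positions]; push_cast; ring_nf) (· < t),
      Int.card_filter_Icc_zero_lt]
    push_cast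
    ring_nf
  rw [interlace_iff_positions, interlace_iff_card_filter_lt hα.monotone hβ.monotone,
    forall_eq_or_eq_add_one_iff_card_filter_lt hx.monotone hx'.monotone]
  refine forall_congr' fun t => ?_
  -- the size bounds are needed only for `t > N + p`, where both sides hold trivially
  have := hcount t
  have := hcount (t - 1)
  have := hcount' t
  have := Fin.card_filter_le fun i => x i < t
  have := Fin.card_filter_le fun i => x' i < t
  have := Fin.card_filter_le fun i => positions lam i < t
  have := Fin.card_filter_le fun i => positions mu i < t
  omega

/-- signatures `λ ∈ 𝔾𝕋_N` and `μ ∈ 𝔾𝕋_{N+1}` (with entries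
between `0` and `p`) interlace, i.e. `μ_1 ≥ λ_1 ≥ μ_2 ≥ ⋯ ≥ λ_N ≥ μ_{N+1}`,
iff the associated point configurations `X(λ) = (x_1 < ⋯ < x_p)` and
`X(μ) = (x'_1 < ⋯ < x'_p)` satisfy `x'_i = x_i` or `x'_i = x_i + 1` for all `i`.
Here `lam i` stands for `λ_{i+1}`, `mu i` for `μ_{i+1}`, and
`X(λ) = {0,…,N+p−1} \ {λ_i − i + N}`, `X(μ) = {0,…,N+p} \ {μ_i − i + N + 1}`. -/
theorem interlacing_iff (N p : ℕ) (hN : 1 ≤ N) (hp : 1 ≤ p)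
    (lam : Fin N → ℤ) (hlmono : ∀ i j : Fin N, i ≤ j → lam j ≤ lam i)
    (hltop : ∀ i, lam i ≤ p) (hlbot : ∀ i, 0 ≤ lam i)
    (mu : Fin (N + 1) → ℤ) (hmmono : ∀ i j : Fin (N + 1), i ≤ j → mu j ≤ mu i)
    (hmtop : ∀ i, mu i ≤ p) (hmbot : ∀ i, 0 ≤ mu i)
    (x : Fin p → ℤ) (hx : StrictMono x)
    (x' : Fin p → ℤ) (hx' : StrictMono x')
    (hX : Finset.image x Finset.univ
      = Finset.Icc (0 : ℤ) ((N : ℤ) + p - 1)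
        \ Finset.image (fun i : Fin N => lam i + N - 1 - (i : ℕ)) Finset.univ)
    (hX' : Finset.image x' Finset.univ
      = Finset.Icc (0 : ℤ) ((N : ℤ) + p)
        \ Finset.image (fun i : Fin (N + 1) => mu i + N - (i : ℕ)) Finset.univ) :
    (∀ i : Fin N, lam i ≤ mu i.castSucc ∧ mu i.succ ≤ lam i)
      ↔ ∀ i : Fin p, x' i = x i ∨ x' i = x i + 1 :=
  interlacing_iff_general N p lam hlmono hltop hlbot mu hmmono hmtop hmbot x hx x' hx' hX hX'
end

section
/- Fix integers p ≥ 1, N ≥ 1 and reals z' > p−1, w' > −1. Let X = (x_1 < ⋯ < x_p) be a tuple of integers in {0,…,N+p−1} and X' = (x'_1 < ⋯ < x'_p) a tuple in {0,…,N+p} such that x'_i ∈ {x_i, x_i+1} for every i. Define P_N(X) = Z_N V(X)² ∏_{i=1}^p w_N(x_i), P_{N+1}(X') = Z_{N+1} V(X')² ∏_{i=1}^p w_{N+1}(x'_i), D_N(X) = V(X)·∏_{i=1}^p 1/(x_i!(N+p−1−x_i)!)·∏_{i=1}^p (N+i−1)!, and D_{N+1}(X') analogously with N replaced by N+1. Then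 (P_{N+1}(X')/P_N(X)) · (D_N(X)/D_{N+1}(X')) = (1/(z'+w'+N+1)_p) · (V(X')/V(X)) · ∏_{i : x'_i = x_i} (z'+N−x_i) · ∏_{i : x'_i = x_i+1} (w'+1+x_i). -/
open Finset

/-- Pochhammer symbol `(a)_j = a(a+1)⋯(a+j−1)`. -/
noncomputable def poch (a : ℝ) (j : ℕ) : ℝ := ∏ m ∈ Finset.range j, (a + m)

/-- Vandermonde product of a strictly increasing tuple: `V(X) = ∏_{i<j}(x_j − x_i)`. -/
noncomputable def vandF (p : ℕ) (x : Fin p → ℤ) : ℝ :=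
  ∏ i : Fin p, ∏ j ∈ Finset.univ.filter (fun j : Fin p => i < j), ((x j : ℝ) - (x i : ℝ))

/-- Weight `w_N(x) = Γ(z'+N−x)Γ(w'+x+1)/(Γ(N+p−x)Γ(x+1))`. -/
noncomputable def wgt (p N : ℕ) (z' w' : ℝ) (x : ℤ) : ℝ :=
  Real.Gamma (z' + N - (x : ℝ)) * Real.Gamma (w' + (x : ℝ) + 1)
    / (Real.Gamma ((N : ℝ) + p - (x : ℝ)) * Real.Gamma ((x : ℝ) + 1))

/-- Normalization `Z_N = ∏_{i=1}^{N} (i)_p/(z'+w'+i)_p · ∏_{i=1}^{p} 1/(Γ(w'+i+1)Γ(z'−i+1))`. -/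
noncomputable def ZN (p N : ℕ) (z' w' : ℝ) : ℝ :=
  (∏ i ∈ Finset.Icc 1 N, poch (i : ℝ) p / poch (z' + w' + i) p)
    * ∏ i ∈ Finset.Icc 1 p, 1 / (Real.Gamma (w' + i + 1) * Real.Gamma (z' - i + 1))

/-- Measure `P_N(X) = Z_N V(X)² ∏_{i=1}^p w_N(x_i)`. -/
noncomputable def PN (p N : ℕ) (z' w' : ℝ) (x : Fin p → ℤ) : ℝ :=
  ZN p N z' w' * (vandF p x) ^ 2 * ∏ i : Fin p, wgt p N z' w' (x i)

/-- Dimension `D_N(X) = V(X)·∏_{i=1}^p 1/(x_i!(N+p−1−x_i)!)·∏_{i=1}^p (N+i−1)!`. -/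
noncomputable def DN (p N : ℕ) (x : Fin p → ℤ) : ℝ :=
  vandF p x
    * (∏ i : Fin p, 1 / ((Nat.factorial (x i).toNat : ℝ)
        * (Nat.factorial ((N : ℤ) + p - 1 - x i).toNat : ℝ)))
    * ∏ i : Fin p, (Nat.factorial (N + (i : ℕ)) : ℝ)

lemma poch_pos {a : ℝ} (ha : 0 < a) (j : ℕ) : 0 < poch a j := by
  unfold poch
  exact Finset.prod_pos fun m _ => by positivity

lemma vandF_pos {p : ℕ} {x : Fin p → ℤ} (hx : StrictMono x) : 0 < vandF p x := by
  unfold vandF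
  refine Finset.prod_pos fun i _ => Finset.prod_pos fun j hj => ?_
  have h : i < j := (Finset.mem_filter.mp hj).2
  have h2 : (x i : ℝ) < x j := by exact_mod_cast hx h
  linarith

lemma wgt_eq (p N : ℕ) (z' w' : ℝ) (a : ℤ) (h0 : 0 ≤ a) (h1 : a ≤ (N:ℤ) + p - 1) :
    wgt p N z' w' a =
      Real.Gamma (z' + N - (a:ℝ)) * Real.Gamma (w' + (a:ℝ) + 1) /
        ((Nat.factorial a.toNat : ℝ) * (Nat.factorial ((N:ℤ) + p - 1 - a).toNat : ℝ)) := by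
  have hm : (a.toNat : ℝ) = (a : ℝ) := by exact_mod_cast Int.toNat_of_nonneg h0
  have hk : ((((N:ℤ) + p - 1 - a).toNat : ℕ) : ℝ) = (N:ℝ) + p - 1 - a := by
    have h2 : ((((N:ℤ) + p - 1 - a).toNat : ℤ)) = (N:ℤ) + p - 1 - a :=
      Int.toNat_of_nonneg (by omega)
    have h3 := congrArg (fun t : ℤ => (t : ℝ)) h2
    push_cast at h3
    exact h3
  unfold wgt
  rw [show ((N:ℝ) + p - (a:ℝ)) = ((((N:ℤ) + p - 1 - a).toNat : ℝ)) + 1 by rw [hk]; ring,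
    show (a:ℝ) + 1 = ((a.toNat : ℝ)) + 1 by rw [hm],
    Real.Gamma_nat_eq_factorial, Real.Gamma_nat_eq_factorial]
  ring

lemma key (p N : ℕ) (z' w' : ℝ) (hz : z' > (p:ℝ) - 1) (hw : w' > -1)
    (a b : ℤ) (h0 : 0 ≤ a) (h1 : a ≤ (N:ℤ) + p - 1) (hb : b = a ∨ b = a + 1) :
    wgt p (N+1) z' w' b
        * (1 / ((Nat.factorial a.toNat : ℝ) * (Nat.factorial ((N:ℤ)+p-1-a).toNat : ℝ)))
    = wgt p N z' w' a
        * (1 / ((Nat.factorial b.toNat : ℝ)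
            * (Nat.factorial (((N+1:ℕ):ℤ)+p-1-b).toNat : ℝ)))
      * (if b = a then z' + N - (a:ℝ) else w' + 1 + (a:ℝ)) := by
  have hb0 : 0 ≤ b := by omega
  have hb1 : b ≤ ((N+1:ℕ):ℤ) + p - 1 := by push_cast; omega
  have ha' : (a:ℝ) ≤ (N:ℝ) + p - 1 := by exact_mod_cast h1
  have ha0' : (0:ℝ) ≤ (a:ℝ) := by exact_mod_cast h0
  rw [wgt_eq p N z' w' a h0 h1, wgt_eq p (N+1) z' w' b hb0 hb1]
  have hA : (Nat.factorial a.toNat : ℝ) * (Nat.factorial ((N:ℤ)+p-1-a).toNat : ℝ) ≠ 0 :=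
    mul_ne_zero (Nat.cast_ne_zero.mpr (Nat.factorial_ne_zero _))
      (Nat.cast_ne_zero.mpr (Nat.factorial_ne_zero _))
  have hB : (Nat.factorial b.toNat : ℝ)
      * (Nat.factorial (((N+1:ℕ):ℤ)+p-1-b).toNat : ℝ) ≠ 0 :=
    mul_ne_zero (Nat.cast_ne_zero.mpr (Nat.factorial_ne_zero _))
      (Nat.cast_ne_zero.mpr (Nat.factorial_ne_zero _))
  rcases hb with rfl | rfl
  · rw [if_pos rfl]
    rw [show z' + ((N+1:ℕ):ℝ) - (b:ℝ) = (z' + (N:ℝ) - b) + 1 by push_cast; ring,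
      Real.Gamma_add_one (ne_of_gt (by linarith : (0:ℝ) < z' + (N:ℝ) - b))]
    field_simp
  · rw [if_neg (by omega)]
    rw [show z' + ((N+1:ℕ):ℝ) - ((a+1:ℤ):ℝ) = z' + (N:ℝ) - a by push_cast; ring,
      show w' + ((a+1:ℤ):ℝ) + 1 = (w' + (a:ℝ) + 1) + 1 by push_cast; ring,
      Real.Gamma_add_one (ne_of_gt (by linarith : (0:ℝ) < w' + (a:ℝ) + 1))]
    field_simp
    ring

lemma ZN_pos (p N : ℕ) (hp : 1 ≤ p) (z' w' : ℝ) (hz : z' > (p : ℝ) - 1) (hw : w' > -1) :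
    0 < ZN p N z' w' := by
  have hp1 : (1:ℝ) ≤ p := by exact_mod_cast hp
  unfold ZN
  apply mul_pos
  · refine Finset.prod_pos fun i hi => ?_
    have h1 : 1 ≤ i := (Finset.mem_Icc.mp hi).1
    have h1' : (1:ℝ) ≤ i := by exact_mod_cast h1
    exact div_pos (poch_pos (by linarith) p) (poch_pos (by linarith) p)
  · refine Finset.prod_pos fun i hi => ?_
    have h1 : 1 ≤ i ∧ i ≤ p := Finset.mem_Icc.mp hi
    have h1' : (1:ℝ) ≤ i := by exact_mod_cast h1.1
    have h2' : (i:ℝ) ≤ p := by exact_mod_cast h1.2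
    have g1 : 0 < Real.Gamma (w' + i + 1) := Real.Gamma_pos_of_pos (by linarith)
    have g2 : 0 < Real.Gamma (z' - i + 1) := Real.Gamma_pos_of_pos (by linarith)
    positivity

/-- the "up" transition probability
`(P_{N+1}(X')/P_N(X)) · (D_N(X)/D_{N+1}(X'))` equals
`(1/(z'+w'+N+1)_p) · (V(X')/V(X)) · ∏_{i : x'_i = x_i} (z'+N−x_i)
  · ∏_{i : x'_i = x_i+1} (w'+1+x_i)`. -/
theorem up_transition_formula (p N : ℕ) (hp : 1 ≤ p) (hN : 1 ≤ N)
    (z' w' : ℝ) (hz : z' > (p : ℝ) - 1) (hw : w' > -1)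
    (x : Fin p → ℤ) (hx : StrictMono x)
    (hxr : ∀ i, x i ∈ Finset.Icc (0 : ℤ) ((N : ℤ) + p - 1))
    (x' : Fin p → ℤ) (hx' : StrictMono x')
    (hx'r : ∀ i, x' i ∈ Finset.Icc (0 : ℤ) ((N : ℤ) + p))
    (hint : ∀ i, x' i = x i ∨ x' i = x i + 1) :
    (PN p (N + 1) z' w' x' / PN p N z' w' x) * (DN p N x / DN p (N + 1) x')
    = 1 / poch (z' + w' + N + 1) p * (vandF p x' / vandF p x)
      * (∏ i ∈ Finset.univ.filter (fun i : Fin p => x' i = x i), (z' + N - (x i : ℝ)))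
      * ∏ i ∈ Finset.univ.filter (fun i : Fin p => x' i = x i + 1), (w' + 1 + (x i : ℝ)) := by
  have hxlo : ∀ i, 0 ≤ x i := fun i => (Finset.mem_Icc.mp (hxr i)).1
  have hxhi : ∀ i, x i ≤ (N:ℤ) + p - 1 := fun i => (Finset.mem_Icc.mp (hxr i)).2
  -- positivity facts
  have hZ : 0 < ZN p N z' w' := ZN_pos p N hp z' w' hz hw
  have hV : 0 < vandF p x := vandF_pos hx
  have hV' : 0 < vandF p x' := vandF_pos hx'
  have hW : 0 < ∏ i : Fin p, wgt p N z' w' (x i) := by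
    refine Finset.prod_pos fun i _ => ?_
    have h1 : (x i : ℝ) ≤ (N:ℝ) + p - 1 := by exact_mod_cast hxhi i
    have h0 : (0:ℝ) ≤ (x i : ℝ) := by exact_mod_cast hxlo i
    unfold wgt
    exact div_pos
      (mul_pos (Real.Gamma_pos_of_pos (by linarith)) (Real.Gamma_pos_of_pos (by linarith)))
      (mul_pos (Real.Gamma_pos_of_pos (by linarith)) (Real.Gamma_pos_of_pos (by linarith)))
  have hA : 0 < ∏ i : Fin p, 1 / ((Nat.factorial (x i).toNat : ℝ)
      * (Nat.factorial ((N : ℤ) + p - 1 - x i).toNat : ℝ)) := by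
    refine Finset.prod_pos fun i _ => ?_
    have := Nat.factorial_pos (x i).toNat
    have := Nat.factorial_pos ((N : ℤ) + p - 1 - x i).toNat
    positivity
  have hA' : 0 < ∏ i : Fin p, 1 / ((Nat.factorial (x' i).toNat : ℝ)
      * (Nat.factorial (((N+1 : ℕ) : ℤ) + p - 1 - x' i).toNat : ℝ)) := by
    refine Finset.prod_pos fun i _ => ?_
    have := Nat.factorial_pos (x' i).toNat
    have := Nat.factorial_pos (((N+1 : ℕ) : ℤ) + p - 1 - x' i).toNat
    positivity
  have hF : 0 < ∏ i : Fin p, (Nat.factorial (N + (i : ℕ)) : ℝ) :=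
    Finset.prod_pos fun i _ => by exact_mod_cast Nat.factorial_pos _
  have hQ : 0 < poch (z' + w' + N + 1) p := by
    apply poch_pos
    have : (1:ℝ) ≤ N := by exact_mod_cast hN
    have : (1:ℝ) ≤ p := by exact_mod_cast hp
    linarith
  have hP1 : 0 < poch ((N:ℝ) + 1) p := poch_pos (by positivity) p
  -- step 1 : ZN ratio
  have e1 : ZN p (N+1) z' w' = ZN p N z' w'
      * (poch ((N:ℝ)+1) p / poch (z' + w' + N + 1) p) := by
    unfold ZN
    rw [Finset.prod_Icc_succ_top (Nat.le_add_left 1 N)]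
    rw [show (((N+1 : ℕ)) : ℝ) = (N:ℝ) + 1 by push_cast; ring]
    rw [show z' + w' + ((N:ℝ) + 1) = z' + w' + N + 1 by ring]
    ring
  -- step 2 : factorial product ratio
  have e2 : (∏ i : Fin p, (Nat.factorial (N + 1 + (i : ℕ)) : ℝ))
      = (∏ i : Fin p, (Nat.factorial (N + (i : ℕ)) : ℝ)) * poch ((N:ℝ)+1) p := by
    unfold poch
    rw [Fin.prod_univ_eq_prod_range (fun m => (Nat.factorial (N + 1 + m) : ℝ)),
      Fin.prod_univ_eq_prod_range (fun m => (Nat.factorial (N + m) : ℝ)),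
      ← Finset.prod_mul_distrib]
    refine Finset.prod_congr rfl fun m _ => ?_
    rw [show N + 1 + m = (N + m) + 1 by ring, Nat.factorial_succ]
    push_cast
    ring
  -- step 3 : weight products
  have e3 : (∏ i : Fin p, wgt p (N+1) z' w' (x' i))
        * (∏ i : Fin p, 1 / ((Nat.factorial (x i).toNat : ℝ)
            * (Nat.factorial ((N : ℤ) + p - 1 - x i).toNat : ℝ)))
      = ((∏ i : Fin p, wgt p N z' w' (x i))
        * (∏ i : Fin p, 1 / ((Nat.factorial (x' i).toNat : ℝ)
            * (Nat.factorial (((N+1 : ℕ) : ℤ) + p - 1 - x' i).toNat : ℝ))))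
        * ∏ i : Fin p, (if x' i = x i then z' + N - (x i : ℝ) else w' + 1 + (x i : ℝ)) := by
    rw [← Finset.prod_mul_distrib, ← Finset.prod_mul_distrib, ← Finset.prod_mul_distrib]
    exact Finset.prod_congr rfl fun i _ =>
      key p N z' w' hz hw (x i) (x' i) (hxlo i) (hxhi i) (hint i)
  -- step 4 : split the conditional product
  have e4 : (∏ i : Fin p, (if x' i = x i then z' + N - (x i : ℝ) else w' + 1 + (x i : ℝ)))
      = (∏ i ∈ Finset.univ.filter (fun i : Fin p => x' i = x i), (z' + N - (x i : ℝ)))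
        * ∏ i ∈ Finset.univ.filter (fun i : Fin p => x' i = x i + 1), (w' + 1 + (x i : ℝ)) := by
    rw [← Finset.prod_filter_mul_prod_filter_not Finset.univ (fun i : Fin p => x' i = x i)
      (fun i => if x' i = x i then z' + N - (x i : ℝ) else w' + 1 + (x i : ℝ))]
    have hfe : (Finset.univ.filter fun i : Fin p => ¬ x' i = x i)
        = Finset.univ.filter fun i : Fin p => x' i = x i + 1 := by
      ext i
      simp only [Finset.mem_filter, Finset.mem_univ, true_and]
      constructor
      · intro h
        rcases hint i with h' | h'
        · exact absurd h' h
        · exact h'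
      · intro h
        omega
    rw [hfe]
    congr 1
    · exact Finset.prod_congr rfl fun i hi => if_pos (Finset.mem_filter.mp hi).2
    · refine Finset.prod_congr rfl fun i hi => ?_
      have h := (Finset.mem_filter.mp hi).2
      rw [if_neg (by omega)]
  -- assemble
  have hAne : (∏ i : Fin p, 1 / ((Nat.factorial (x i).toNat : ℝ)
      * (Nat.factorial ((N : ℤ) + p - 1 - x i).toNat : ℝ))) ≠ 0 := ne_of_gt hA
  have e5 : (∏ i : Fin p, wgt p (N+1) z' w' (x' i))
      = ((∏ i : Fin p, wgt p N z' w' (x i))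
        * (∏ i : Fin p, 1 / ((Nat.factorial (x' i).toNat : ℝ)
            * (Nat.factorial (((N+1 : ℕ) : ℤ) + p - 1 - x' i).toNat : ℝ))))
        * ((∏ i ∈ Finset.univ.filter (fun i : Fin p => x' i = x i), (z' + N - (x i : ℝ)))
          * ∏ i ∈ Finset.univ.filter (fun i : Fin p => x' i = x i + 1), (w' + 1 + (x i : ℝ)))
        / (∏ i : Fin p, 1 / ((Nat.factorial (x i).toNat : ℝ)
            * (Nat.factorial ((N : ℤ) + p - 1 - x i).toNat : ℝ))) := by
    rw [eq_div_iff hAne, ← e4]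
    exact e3
  simp only [PN, DN]
  rw [e1, e2, e5]
  field_simp
end

section
/- Let v : ℤ × ℤ → ℝ satisfy v(x,y) = 0 whenever y ≠ x and y ≠ x+1 (a two-diagonal matrix). Let p ≥ 1 and let x_1 < x_2 < ⋯ < x_p and x'_1 < x'_2 < ⋯ < x'_p be integers. Then det[v(x_i, x'_j)]_{i,j=1,…,p} = ∏_{i=1}^{p} v(x_i, x'_i). In particular, the determinant vanishes unless x'_i ∈ {x_i, x_i+1} for every i. -/
open Finset

/-- for a two-diagonal kernel `v` (i.e. `v(x,y) = 0` unless
`y = x` or `y = x+1`) and strictly increasing integer tuples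
`x_1 < ⋯ < x_p`, `x'_1 < ⋯ < x'_p`, the minor `det[v(x_i,x'_j)]` equals
the product of the matched entries: `∏_{i=1}^p v(x_i, x'_i)`. -/
theorem two_diagonal_minor (p : ℕ) (hp : 1 ≤ p) (v : ℤ → ℤ → ℝ)
    (hv : ∀ x y : ℤ, y ≠ x → y ≠ x + 1 → v x y = 0)
    (x x' : Fin p → ℤ) (hx : StrictMono x) (hx' : StrictMono x') :
    Matrix.det (Matrix.of fun i j : Fin p => v (x i) (x' j))
      = ∏ i : Fin p, v (x i) (x' i) := by
  rw [Matrix.det_apply]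
  rw [Finset.sum_eq_single (1 : Equiv.Perm (Fin p))]
  · simp
  · intro σ _ hσ
    suffices h : ∏ i : Fin p, (Matrix.of fun i j : Fin p => v (x i) (x' j)) (σ i) i = 0 by
      rw [h, smul_zero]
    by_cases hall : ∀ i : Fin p, x (σ i) ≤ x' i ∧ x' i ≤ x (σ i) + 1
    · exfalso
      -- take minimal non-fixed point of σ
      have hne : (Finset.univ.filter (fun i : Fin p => σ i ≠ i)).Nonempty := by
        have : ∃ i, σ i ≠ i := by
          by_contra hc
          push_neg at hc
          exact hσ (Equiv.ext hc)
        obtain ⟨i, hi⟩ := this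
        exact ⟨i, Finset.mem_filter.mpr ⟨Finset.mem_univ _, hi⟩⟩
      set T := Finset.univ.filter (fun i : Fin p => σ i ≠ i) with hT
      set i := T.min' hne with hi
      have hiT : i ∈ T := T.min'_mem hne
      have hiσ : σ i ≠ i := (Finset.mem_filter.mp hiT).2
      have hfix : ∀ k : Fin p, k < i → σ k = k := by
        intro k hk
        by_contra hkc
        have : k ∈ T := Finset.mem_filter.mpr ⟨Finset.mem_univ _, hkc⟩
        exact absurd (T.min'_le k this) (not_le.mpr hk)
      have hσi : i < σ i := by
        rcases lt_trichotomy (σ i) i with h1 | h1 | h1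
        · have := hfix (σ i) h1
          exact absurd (σ.injective this) hiσ
        · exact absurd h1 hiσ
        · exact h1
      set j := σ.symm i with hj
      have hσj : σ j = i := σ.apply_symm_apply i
      have hij : i < j := by
        rcases lt_trichotomy j i with h1 | h1 | h1
        · rw [hfix j h1] at hσj
          exact absurd hσj (ne_of_lt h1)
        · rw [h1] at hσj
          exact absurd hσj hiσ
        · exact h1
      have b1 := hall i
      have b2 := hall j
      rw [hσj] at b2
      have c1 : x i < x (σ i) := hx hσi
      have c2 : x' i < x' j := hx' hij
      omega
    · push_neg at hall
      obtain ⟨i, hi⟩ := hall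
      apply Finset.prod_eq_zero (Finset.mem_univ i)
      show v (x (σ i)) (x' i) = 0
      apply hv
      · intro h; rw [h] at hi; omega
      · intro h; rw [h] at hi; omega
  · intro h
    exact absurd (Finset.mem_univ _) h
end

section
/- Let α > −1 and β > −1 be real numbers, M ≥ 1 an integer and 0 ≤ k ≤ M−1. Then, as an identity of polynomials in the real variable x: x·Q_k(x−1; α, β, M−1) + (M−x)·Q_k(x; α, β, M−1) = M·Q_k(x; α, β, M). -/
/-!
Write `Q_k(x; α, β, M) = Σ_j c_j · (−x)_j / (−M)_j`, where the coefficients `c_j` do not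
depend on `x` or `M`. The recurrence then holds term by term: it reduces to the Pochhammer
identity `x (1−x)_j (−M)_j + (M−x) (−x)_j (−M)_j = M (−x)_j (1−M)_j`, which follows from
`(a)_{j+1} = a (a+1)_j = (a)_j (a+j)`. Dividing by `(−M)_j (1−M)_j` is legitimate because
`j ≤ k ≤ M − 1`.
-/

open Finset

/-- Hahn polynomial
`Q_k(x; α, β, M) = Σ_{j=0}^{k} (−k)_j (−x)_j (k+α+β+1)_j / ((−M)_j (α+1)_j j!)`. -/
noncomputable def hahnQ (k : ℕ) (α β : ℝ) (M : ℕ) (x : ℝ) : ℝ :=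
  ∑ j ∈ Finset.range (k + 1),
    poch (-(k : ℝ)) j * poch (-x) j * poch ((k : ℝ) + α + β + 1) j
      / (poch (-(M : ℝ)) j * poch (α + 1) j * (Nat.factorial j : ℝ))

lemma poch_succ_right (a : ℝ) (j : ℕ) : poch a (j + 1) = poch a j * (a + j) := by
  simp [poch, prod_range_succ]

lemma poch_succ_left (a : ℝ) (j : ℕ) : poch a (j + 1) = a * poch (a + 1) j := by
  simp only [poch, prod_range_succ', Nat.cast_add, Nat.cast_one, Nat.cast_zero, add_zero]
  rw [mul_comm]
  congr 1
  exact prod_congr rfl fun m _ => by ring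

lemma poch_neg_natCast_ne_zero {N j : ℕ} (h : j ≤ N) : poch (-(N : ℝ)) j ≠ 0 := by
  refine prod_ne_zero_iff.mpr fun m hm => ?_
  have : (m : ℝ) < N := by exact_mod_cast (mem_range.mp hm).trans_le h
  linarith

lemma poch_contiguous (μ x : ℝ) (j : ℕ) :
    x * poch (1 - x) j * poch (-μ) j + (μ - x) * poch (-x) j * poch (-μ) j
      = μ * poch (-x) j * poch (1 - μ) j := by
  cases j with
  | zero => simp [poch]
  | succ i =>
    have hμ : poch (-μ) (i + 1) = -μ * poch (1 - μ) i := by rw [poch_succ_left]; ring_nf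
    have hx : poch (-x) (i + 1) = -x * poch (1 - x) i := by rw [poch_succ_left]; ring_nf
    rw [hμ, hx, poch_succ_right (1 - μ), poch_succ_right (1 - x)]
    ring

lemma poch_div_contiguous (μ x : ℝ) {j : ℕ} (h₀ : poch (-μ) j ≠ 0) (h₁ : poch (1 - μ) j ≠ 0) :
    x * (poch (1 - x) j / poch (1 - μ) j) + (μ - x) * (poch (-x) j / poch (1 - μ) j)
      = μ * (poch (-x) j / poch (-μ) j) := by
  field_simp
  linear_combination poch_contiguous μ x j

noncomputable def hahnCoeff (k : ℕ) (α β : ℝ) (j : ℕ) : ℝ :=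
  poch (-(k : ℝ)) j * poch ((k : ℝ) + α + β + 1) j / (poch (α + 1) j * (j.factorial : ℝ))

lemma hahnQ_eq_sum_hahnCoeff (k : ℕ) (α β : ℝ) (M : ℕ) (x : ℝ) :
    hahnQ k α β M x
      = ∑ j ∈ range (k + 1), hahnCoeff k α β j * (poch (-x) j / poch (-(M : ℝ)) j) := by
  refine sum_congr rfl fun j _ => ?_
  rw [hahnCoeff, div_mul_div_comm]
  ring_nf

theorem hahn_recurrence_general (α β : ℝ)
    (M k : ℕ) (hM : 1 ≤ M) (hk : k ≤ M - 1) :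
    ∀ x : ℝ, x * hahnQ k α β (M - 1) (x - 1) + ((M : ℝ) - x) * hahnQ k α β (M - 1) x
      = (M : ℝ) * hahnQ k α β M x := by
  intro x
  have hcast : ((M - 1 : ℕ) : ℝ) = M - 1 := by rw [Nat.cast_sub hM, Nat.cast_one]
  simp only [hahnQ_eq_sum_hahnCoeff, mul_sum, ← sum_add_distrib]
  refine sum_congr rfl fun j hj => ?_
  have hj : j ≤ M - 1 := (Nat.lt_succ_iff.mp (mem_range.mp hj)).trans hk
  have h₀ : poch (-(M : ℝ)) j ≠ 0 := poch_neg_natCast_ne_zero (hj.trans (Nat.sub_le M 1))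
  have h₁ : poch (1 - M) j ≠ 0 := by
    simpa only [hcast, neg_sub] using poch_neg_natCast_ne_zero (N := M - 1) hj
  rw [hcast, neg_sub, neg_sub]
  linear_combination hahnCoeff k α β j * poch_div_contiguous (M : ℝ) x h₀ h₁

/-- the recurrence relation for Hahn polynomials:
`x·Q_k(x−1; α, β, M−1) + (M−x)·Q_k(x; α, β, M−1) = M·Q_k(x; α, β, M)`
as an identity in the real variable `x`. -/
theorem hahn_recurrence (α β : ℝ) (hα : α > -1) (hβ : β > -1)
    (M k : ℕ) (hM : 1 ≤ M) (hk : k ≤ M - 1) :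
    ∀ x : ℝ, x * hahnQ k α β (M - 1) (x - 1) + ((M : ℝ) - x) * hahnQ k α β (M - 1) x
      = (M : ℝ) * hahnQ k α β M x :=
  hahn_recurrence_general α β M k hM hk
end

section
/- Let p ≥ 1 be an integer and z', w' real numbers. Let V(x_1,…,x_p) = ∏_{1 ≤ i < j ≤ p}(x_j − x_i) and let 𝒟_{z',w',p} = ∑_{i=1}^{p} [x_i(1−x_i)·∂²/∂x_i² + (w'+1 − (w'+z'−p+2)x_i)·∂/∂x_i]. Then 𝒟_{z',w',p} V = −K_{p,z',w'} · V identically, where K_{p,z',w'} = ∑_{i=0}^{p−1} i(i+w'+z'+1−p) = (p(p−1)/2)·(w'+z' − (p−2)/3). -/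
/-!
With all coordinates but `x i` fixed, `V` is `c * ∏_{j ≠ i} (t - x j)` as a function of `t = x i`.
At a point with distinct coordinates its first and second partial derivatives in `x i` are
therefore `V * ∑_k (x i - x k)⁻¹` and `V * ∑_{k ≠ l} ((x i - x k) * (x i - x l))⁻¹`.
Symmetrizing over ordered pairs and triples of indices, the identities
`(w - β a) / (a - b) + (w - β b) / (b - a) = -β` and
`a (1 - a) / ((a - b)(a - c)) + b (1 - b) / ((b - c)(b - a)) + c (1 - c) / ((c - a)(c - b)) = -1`
turn `𝒟 V / V` into a constant. Both sides of the identity are continuous in `x` and points with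
distinct coordinates are dense, so it holds everywhere.
-/

open Finset

/-- The Vandermonde polynomial `V(x_1,…,x_p) = ∏_{1 ≤ i < j ≤ p}(x_j − x_i)`. -/
noncomputable def vandR (p : ℕ) (x : Fin p → ℝ) : ℝ :=
  ∏ i : Fin p, ∏ j ∈ Finset.univ.filter (fun j : Fin p => i < j), (x j - x i)

open Function Filter Topology

section ProdSub

variable {𝕜 ι : Type*} [NontriviallyNormedField 𝕜] [DecidableEq ι] (s : Finset ι) (a : ι → 𝕜)

theorem hasDerivAt_prod_sub (t : 𝕜) :
    HasDerivAt (fun t => ∏ j ∈ s, (t - a j)) (∑ k ∈ s, ∏ j ∈ s.erase k, (t - a j)) t := by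
  simpa using HasDerivAt.fun_finsetProd (u := s) (f' := fun _ => 1)
    fun j _ => (hasDerivAt_id t).sub_const (a j)

theorem deriv_const_mul_prod_sub (c : 𝕜) :
    deriv (fun t => c * ∏ j ∈ s, (t - a j)) =
      fun t => c * ∑ k ∈ s, ∏ j ∈ s.erase k, (t - a j) :=
  funext fun t => ((hasDerivAt_prod_sub s a t).const_mul c).deriv

theorem iteratedDeriv_two_const_mul_prod_sub (c : 𝕜) :
    iteratedDeriv 2 (fun t => c * ∏ j ∈ s, (t - a j)) =
      fun t => c * ∑ k ∈ s, ∑ l ∈ s.erase k, ∏ j ∈ (s.erase k).erase l, (t - a j) := by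
  rw [iteratedDeriv_succ, iteratedDeriv_one, deriv_const_mul_prod_sub]
  exact funext fun t =>
    ((HasDerivAt.fun_sum fun k _ => hasDerivAt_prod_sub (s.erase k) a t).const_mul c).deriv

end ProdSub

namespace Finset

section LogDeriv

variable {K ι : Type*} [Field K] [DecidableEq ι] {s : Finset ι} {f : ι → K}

theorem prod_erase_eq_div₀ {k : ι} (hk : k ∈ s) (hf : f k ≠ 0) :
    ∏ j ∈ s.erase k, f j = (∏ j ∈ s, f j) / f k := by
  rw [eq_div_iff hf, prod_erase_mul _ _ hk]

theorem sum_prod_erase_eq_prod_mul (hf : ∀ j ∈ s, f j ≠ 0) :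
    ∑ k ∈ s, ∏ j ∈ s.erase k, f j = (∏ j ∈ s, f j) * ∑ k ∈ s, (f k)⁻¹ := by
  rw [mul_sum]
  exact sum_congr rfl fun k hk => by rw [prod_erase_eq_div₀ hk (hf k hk), div_eq_mul_inv]

theorem sum_sum_prod_erase_erase_eq_prod_mul (hf : ∀ j ∈ s, f j ≠ 0) :
    ∑ k ∈ s, ∑ l ∈ s.erase k, ∏ j ∈ (s.erase k).erase l, f j =
      (∏ j ∈ s, f j) * ∑ k ∈ s, ∑ l ∈ s.erase k, (f k * f l)⁻¹ := by
  rw [mul_sum]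
  refine sum_congr rfl fun k hk => ?_
  rw [sum_prod_erase_eq_prod_mul fun j hj => hf j (mem_of_mem_erase hj),
    prod_erase_eq_div₀ hk (hf k hk), mul_sum, mul_sum]
  refine sum_congr rfl fun l _ => ?_
  rw [mul_inv]
  ring

end LogDeriv

section DistinctIndices

variable {ι : Type*} [DecidableEq ι] (s : Finset ι)

theorem sum_sum_erase_comm {M : Type*} [AddCommMonoid M] (f : ι → ι → M) :
    ∑ i ∈ s, ∑ k ∈ s.erase i, f i k = ∑ i ∈ s, ∑ k ∈ s.erase i, f k i :=
  sum_comm' fun i k => by simp only [mem_erase]; tauto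

theorem sum_sum_sum_erase_rotate {M : Type*} [AddCommMonoid M] (f : ι → ι → ι → M) :
    ∑ i ∈ s, ∑ k ∈ s.erase i, ∑ l ∈ (s.erase i).erase k, f i k l =
      ∑ i ∈ s, ∑ k ∈ s.erase i, ∑ l ∈ (s.erase i).erase k, f k l i := by
  symm
  rw [sum_comm' (t' := s) (s' := s.erase) fun i k => by simp only [mem_erase]; tauto]
  refine sum_congr rfl fun k _ => sum_comm' fun i l => ?_
  simp only [mem_erase]
  grind

theorem sum_sum_erase_const {R : Type*} [CommRing R] (c : R) :
    ∑ i ∈ s, ∑ _k ∈ s.erase i, c = #s * (#s - 1) * c := by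
  rw [sum_congr rfl fun i hi => by rw [sum_const, nsmul_eq_mul, cast_card_erase_of_mem hi]]
  simp [mul_assoc]

theorem sum_sum_sum_erase_const {R : Type*} [CommRing R] (c : R) :
    ∑ i ∈ s, ∑ k ∈ s.erase i, ∑ _l ∈ (s.erase i).erase k, c = #s * (#s - 1) * (#s - 2) * c := by
  rw [sum_congr rfl fun i hi => by rw [sum_sum_erase_const, cast_card_erase_of_mem hi]]
  simp only [sum_const, nsmul_eq_mul]
  ring

end DistinctIndices

section Symmetrization

variable {K ι : Type*} [Field K] [CharZero K] [DecidableEq ι] {s : Finset ι} {x : ι → K}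

theorem sum_mul_sum_inv_sub (hx : Set.InjOn x s) (β w : K) :
    ∑ i ∈ s, (w - β * x i) * ∑ k ∈ s.erase i, (x i - x k)⁻¹ = -β * (#s * (#s - 1)) / 2 := by
  set F : ι → ι → K := fun i k => (w - β * x i) * (x i - x k)⁻¹
  have hpair : ∀ i ∈ s, ∀ k ∈ s.erase i, F i k + F k i = -β := fun i hi k hk => by
    have hik := (hx.ne_iff hi (mem_of_mem_erase hk)).2 (ne_of_mem_erase hk).symm
    simp only [F]
    field_simp [sub_ne_zero.2 hik, sub_ne_zero.2 hik.symm]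
    ring
  have hsum : 2 * ∑ i ∈ s, ∑ k ∈ s.erase i, F i k = #s * (#s - 1) * -β := by
    rw [two_mul]
    nth_rw 2 [sum_sum_erase_comm]
    rw [← sum_sum_erase_const, ← sum_add_distrib]
    exact sum_congr rfl fun i hi => by rw [← sum_add_distrib]; exact sum_congr rfl (hpair i hi)
  simp_rw [mul_sum]
  linear_combination hsum / 2

theorem sum_mul_sum_sum_inv_sub (hx : Set.InjOn x s) :
    ∑ i ∈ s, x i * (1 - x i) *
        ∑ k ∈ s.erase i, ∑ l ∈ (s.erase i).erase k, ((x i - x k) * (x i - x l))⁻¹ =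
      -(#s * (#s - 1) * (#s - 2)) / 3 := by
  set F : ι → ι → ι → K := fun i k l => x i * (1 - x i) * ((x i - x k) * (x i - x l))⁻¹
  have htriple : ∀ i ∈ s, ∀ k ∈ s.erase i, ∀ l ∈ (s.erase i).erase k,
      F i k l + F k l i + F l i k = -1 := fun i hi k hk l hl => by
    simp only [mem_erase] at hk hl
    have hik := (hx.ne_iff hi hk.2).2 hk.1.symm
    have hil := (hx.ne_iff hi hl.2.2).2 hl.2.1.symm
    have hkl := (hx.ne_iff hk.2 hl.2.2).2 hl.1.symm
    simp only [F]
    field_simp [sub_ne_zero.2 hik, sub_ne_zero.2 hil, sub_ne_zero.2 hkl,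
      sub_ne_zero.2 hik.symm, sub_ne_zero.2 hil.symm, sub_ne_zero.2 hkl.symm]
    ring
  have hsum : 3 * ∑ i ∈ s, ∑ k ∈ s.erase i, ∑ l ∈ (s.erase i).erase k, F i k l =
      #s * (#s - 1) * (#s - 2) * -1 := by
    have h₁ := sum_sum_sum_erase_rotate s F
    have h₂ := h₁.trans (sum_sum_sum_erase_rotate s fun i k l => F k l i)
    rw [← sum_sum_sum_erase_const, show (3 : K) = 1 + 1 + 1 by norm_num, add_mul, add_mul,
      one_mul]
    nth_rw 2 [h₁]
    nth_rw 2 [h₂]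
    simp only [← sum_add_distrib]
    exact sum_congr rfl fun i hi => sum_congr rfl fun k hk => sum_congr rfl (htriple i hi k hk)
  simp_rw [mul_sum]
  linear_combination hsum / 3

end Symmetrization

theorem sum_range_mul_add {K : Type*} [Field K] [CharZero K] (n : ℕ) (c : K) :
    ∑ i ∈ range n, (i : K) * (i + c) = n * (n - 1) / 2 * (c + (2 * n - 1) / 3) := by
  induction n with
  | zero => simp
  | succ n ih =>
    rw [sum_range_succ, ih]
    push_cast
    ring

theorem prod_filter_lt_eq_mul_prod_erase {ι M : Type*} [Fintype ι] [LinearOrder ι]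
    [CommMonoid M] (g : ι → ι → M) (i : ι) :
    ∏ a, ∏ b ∈ univ.filter (a < ·), g a b =
      (∏ j ∈ univ.erase i, if j < i then g j i else g i j) *
        ∏ a ∈ univ.erase i, ∏ b ∈ (univ.filter (a < ·)).erase i, g a b := by
  have hrow : ∀ a ∈ univ.erase i, ∏ b ∈ univ.filter (a < ·), g a b =
      (if a < i then g a i else 1) * ∏ b ∈ (univ.filter (a < ·)).erase i, g a b := by
    intro a _
    split_ifs with h
    · exact (mul_prod_erase _ _ (by simpa using h)).symm
    · rw [one_mul, erase_eq_of_notMem (by simpa using h)]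
  have hrow_i : ∏ b ∈ univ.filter (i < ·), g i b =
      ∏ j ∈ univ.erase i, if i < j then g i j else 1 := by
    rw [← prod_filter]
    congr 1
    ext j
    simpa using ne_of_gt
  rw [← mul_prod_erase univ _ (mem_univ i), prod_congr rfl hrow, prod_mul_distrib, hrow_i,
    ← mul_assoc, ← prod_mul_distrib]
  congr 1
  refine prod_congr rfl fun j hj => ?_
  rcases lt_trichotomy j i with h | h | h
  · simp [h, h.not_gt]
  · exact absurd h (ne_of_mem_erase hj)
  · simp [h, h.not_gt]

end Finset

theorem Function.Injective.sub_ne_zero_of_mem_erase {ι G : Type*} [DecidableEq ι] [AddGroup G]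
    {x : ι → G} (hx : Injective x) {s : Finset ι} {i j : ι} (hj : j ∈ s.erase i) :
    x i - x j ≠ 0 :=
  sub_ne_zero.2 (hx.ne (ne_of_mem_erase hj).symm)

section Vandermonde

variable {p : ℕ} (x : Fin p → ℝ) (i : Fin p)

noncomputable def vandCofactor : ℝ :=
  (∏ j ∈ univ.erase i, if j < i then 1 else -1) *
    ∏ a ∈ univ.erase i, ∏ b ∈ (univ.filter (a < ·)).erase i, (x b - x a)

theorem vandR_update (t : ℝ) :
    vandR p (update x i t) = vandCofactor x i * ∏ j ∈ univ.erase i, (t - x j) := by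
  have hrow_i : (∏ j ∈ univ.erase i,
      if j < i then update x i t i - update x i t j else update x i t j - update x i t i) =
      (∏ j ∈ univ.erase i, if j < i then (1 : ℝ) else -1) * ∏ j ∈ univ.erase i, (t - x j) := by
    rw [← prod_mul_distrib]
    refine prod_congr rfl fun j hj => ?_
    rw [update_self, update_of_ne (ne_of_mem_erase hj)]
    split_ifs <;> ring
  have hrest :
      ∏ a ∈ univ.erase i, ∏ b ∈ (univ.filter (a < ·)).erase i, (update x i t b - update x i t a) =
      ∏ a ∈ univ.erase i, ∏ b ∈ (univ.filter (a < ·)).erase i, (x b - x a) :=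
    prod_congr rfl fun a ha => prod_congr rfl fun b hb => by
      rw [update_of_ne (ne_of_mem_erase hb), update_of_ne (ne_of_mem_erase ha)]
  rw [vandR, prod_filter_lt_eq_mul_prod_erase _ i, hrow_i, hrest, vandCofactor]
  ring

theorem vandR_eq_vandCofactor_mul :
    vandR p x = vandCofactor x i * ∏ j ∈ univ.erase i, (x i - x j) := by
  simpa using vandR_update x i (x i)

theorem deriv_vandR_update :
    deriv (fun t => vandR p (update x i t)) =
      fun t => vandCofactor x i * ∑ k ∈ univ.erase i, ∏ j ∈ (univ.erase i).erase k, (t - x j) := by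
  simp only [vandR_update]
  exact deriv_const_mul_prod_sub _ _ _

theorem iteratedDeriv_two_vandR_update :
    iteratedDeriv 2 (fun t => vandR p (update x i t)) =
      fun t => vandCofactor x i * ∑ k ∈ univ.erase i, ∑ l ∈ (univ.erase i).erase k,
        ∏ j ∈ ((univ.erase i).erase k).erase l, (t - x j) := by
  simp only [vandR_update]
  exact iteratedDeriv_two_const_mul_prod_sub _ _ _

variable {x}

theorem deriv_vandR_update_self (hx : Injective x) :
    deriv (fun t => vandR p (update x i t)) (x i) =
      vandR p x * ∑ k ∈ univ.erase i, (x i - x k)⁻¹ := by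
  simp only [deriv_vandR_update]
  rw [sum_prod_erase_eq_prod_mul fun j => hx.sub_ne_zero_of_mem_erase,
    vandR_eq_vandCofactor_mul x i, mul_assoc]

theorem iteratedDeriv_two_vandR_update_self (hx : Injective x) :
    iteratedDeriv 2 (fun t => vandR p (update x i t)) (x i) =
      vandR p x * ∑ k ∈ univ.erase i, ∑ l ∈ (univ.erase i).erase k,
        ((x i - x k) * (x i - x l))⁻¹ := by
  simp only [iteratedDeriv_two_vandR_update]
  rw [sum_sum_prod_erase_erase_eq_prod_mul fun j => hx.sub_ne_zero_of_mem_erase,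
    vandR_eq_vandCofactor_mul x i, mul_assoc]

theorem vandR_eigen_of_injective (hx : Injective x) (z' w' : ℝ) :
    ∑ i : Fin p,
        (x i * (1 - x i) * iteratedDeriv 2 (fun t => vandR p (update x i t)) (x i)
          + (w' + 1 - (w' + z' - p + 2) * x i) * deriv (fun t => vandR p (update x i t)) (x i))
      = -(p * (p - 1) / 2 * (w' + z' - (p - 2) / 3)) * vandR p x := by
  have h₁ := sum_mul_sum_inv_sub hx.injOn (s := univ) (w' + z' - p + 2) (w' + 1)
  have h₂ := sum_mul_sum_sum_inv_sub hx.injOn (s := univ)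
  simp only [card_univ, Fintype.card_fin] at h₁ h₂
  simp only [iteratedDeriv_two_vandR_update_self _ hx, deriv_vandR_update_self _ hx,
    mul_left_comm _ (vandR p x), ← mul_add, ← mul_sum, sum_add_distrib, h₁, h₂]
  ring

end Vandermonde

theorem dense_setOf_injective {ι : Type*} [Finite ι] : Dense {x : ι → ℝ | Injective x} := by
  set v : ι → ℝ := fun i => (Finite.equivFin ι i : ℕ)
  have hv : Injective v := fun i j h =>
    (Finite.equivFin ι).injective (Fin.ext (by simpa [v] using h))
  -- For `i ≠ j`, at most one `ε` makes the coordinates `i` and `j` of `x + ε • v` collide.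
  have hsep : ∀ x : ι → ℝ, ∀ i j, i ≠ j →
      ∀ᶠ ε in 𝓝[≠] (0 : ℝ), x i + ε * v i ≠ x j + ε * v j := by
    intro x i j hij
    refine nhdsNE_le_cofinite 0 (eventually_cofinite.2 (Set.Subsingleton.finite ?_))
    have hvij : v j - v i ≠ 0 := sub_ne_zero.2 (hv.ne hij).symm
    exact fun ε₁ h₁ ε₂ h₂ =>
      mul_right_cancel₀ hvij (by linear_combination not_not.1 h₂ - not_not.1 h₁)
  intro x
  refine mem_closure_of_tendsto (f := fun ε : ℝ => x + ε • v) (b := 𝓝[≠] 0) ?_ ?_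
  · exact tendsto_nhdsWithin_of_tendsto_nhds
      ((by fun_prop : Continuous fun ε : ℝ => x + ε • v).tendsto' 0 x (by simp))
  · have : ∀ i j, ∀ᶠ ε in 𝓝[≠] (0 : ℝ), i ≠ j → x i + ε * v i ≠ x j + ε * v j := fun i j => by
      by_cases hij : i = j
      · exact Eventually.of_forall fun _ h => absurd hij h
      · exact (hsep x i j hij).mono fun _ h _ => h
    filter_upwards [eventually_all.2 fun i => eventually_all.2 (this i)] with ε hε i j hij
    by_contra hne
    exact hε i j hne (by simpa using hij)

theorem vandermonde_eigenfunction_general (p : ℕ) (z' w' : ℝ) :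
    (∀ x : Fin p → ℝ,
      ∑ i : Fin p,
        (x i * (1 - x i)
            * iteratedDeriv 2 (fun t => vandR p (Function.update x i t)) (x i)
          + (w' + 1 - (w' + z' - p + 2) * x i)
            * deriv (fun t => vandR p (Function.update x i t)) (x i))
      = -(∑ i ∈ Finset.range p, (i : ℝ) * ((i : ℝ) + w' + z' + 1 - p)) * vandR p x)
    ∧ ∑ i ∈ Finset.range p, (i : ℝ) * ((i : ℝ) + w' + z' + 1 - p)
        = ((p : ℝ) * ((p : ℝ) - 1) / 2) * (w' + z' - ((p : ℝ) - 2) / 3) := by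
  have hK : ∑ i ∈ range p, (i : ℝ) * ((i : ℝ) + w' + z' + 1 - p) =
      p * (p - 1) / 2 * (w' + z' - (p - 2) / 3) := by
    calc _ = ∑ i ∈ range p, (i : ℝ) * (i + (w' + z' + 1 - p)) :=
          sum_congr rfl fun i _ => by ring
      _ = _ := by rw [sum_range_mul_add]; ring
  refine ⟨fun x => ?_, hK⟩
  rw [hK]
  refine congrFun (Continuous.ext_on dense_setOf_injective ?_ ?_
    fun y hy => vandR_eigen_of_injective hy z' w') x
  · simp only [deriv_vandR_update, iteratedDeriv_two_vandR_update, vandCofactor]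
    fun_prop
  · unfold vandR
    fun_prop

/-- the Vandermonde polynomial is an eigenfunction of the operator
`𝒟_{z',w',p} = ∑_i [x_i(1−x_i)·∂²/∂x_i² + (w'+1 − (w'+z'−p+2)x_i)·∂/∂x_i]`
with eigenvalue `−K_{p,z',w'}`, where
`K_{p,z',w'} = ∑_{i=0}^{p−1} i(i+w'+z'+1−p) = (p(p−1)/2)·(w'+z' − (p−2)/3)`. -/
theorem vandermonde_eigenfunction (p : ℕ) (hp : 1 ≤ p) (z' w' : ℝ) :
    (∀ x : Fin p → ℝ,
      ∑ i : Fin p,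
        (x i * (1 - x i)
            * iteratedDeriv 2 (fun t => vandR p (Function.update x i t)) (x i)
          + (w' + 1 - (w' + z' - p + 2) * x i)
            * deriv (fun t => vandR p (Function.update x i t)) (x i))
      = -(∑ i ∈ Finset.range p, (i : ℝ) * ((i : ℝ) + w' + z' + 1 - p)) * vandR p x)
    ∧ ∑ i ∈ Finset.range p, (i : ℝ) * ((i : ℝ) + w' + z' + 1 - p)
        = ((p : ℝ) * ((p : ℝ) - 1) / 2) * (w' + z' - ((p : ℝ) - 2) / 3) :=
  vandermonde_eigenfunction_general p z' w'
end
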